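/- Let P be a finite poset with legs a, b (two incomparable elements each strictly smaller than every element of P ∖ {a, b}), such that P ∖ {a, b} is nonempty and P has no maximum element (no element of P is larger than all other elements of P). Then for every n ∈ ℕ, sat*(n, P) ≥ min{2^n, n + 2}. -/

import Mathlib

open Finset

/-- A family of finite sets contains an induced copy of the poset `P`. -/
def ContainsIndCopy (P : Type*) [PartialOrder P] (F : Finset (Finset ℕ)) : Prop :=
  ∃ f : P → Finset ℕ, Function.Injective f ∧ (∀ p, f p ∈ F) ∧
    ∀ p q : P, p ≤ q ↔ f p ⊆ f q

/-- `F ⊆ 2^[n]` is induced `P`-saturated. -/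
def IsIndPSaturated (n : ℕ) (P : Type*) [PartialOrder P] (F : Finset (Finset ℕ)) : Prop :=
  (∀ A ∈ F, A ⊆ Finset.Icc 1 n) ∧
  ¬ ContainsIndCopy P F ∧
  ∀ G ⊆ Finset.Icc 1 n, G ∉ F → ContainsIndCopy P (insert G F)

/-- `sat*(n, P)`: minimum size of an induced `P`-saturated family in `2^[n]`. -/
noncomputable def satStarP (n : ℕ) (P : Type*) [PartialOrder P] : ℕ :=
  sInf {m | ∃ F : Finset (Finset ℕ), IsIndPSaturated n P F ∧ F.card = m}

/-- `a` and `b` are legs of `P`: incomparable, and each strictly smaller than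
every element of `P \ {a, b}`. -/
def IsLegs (P : Type*) [PartialOrder P] (a b : P) : Prop :=
  ¬ a ≤ b ∧ ¬ b ≤ a ∧ ∀ c : P, c ≠ a → c ≠ b → a < c ∧ b < c

/-- `C ∈ F` is a partner of `x`: `{x}` and `C` form the legs of some induced
copy of `P` in `F ∪ {{x}}`. -/
def IsPartner (P : Type*) [PartialOrder P] (a b : P) (F : Finset (Finset ℕ))
    (x : ℕ) (C : Finset ℕ) : Prop :=
  C ∈ F ∧ ∃ f : P → Finset ℕ, Function.Injective f ∧
    (∀ p, f p ∈ insert ({x} : Finset ℕ) F) ∧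
    (∀ p q : P, p ≤ q ↔ f p ⊆ f q) ∧
    ({f a, f b} : Set (Finset ℕ)) = {({x} : Finset ℕ), C}

/-!
Let `F` be a saturated family other than the whole cube. Since `P` has neither a least nor a
greatest element, `F` contains `∅` and `[n]`; since `P` has two disjoint incomparable pairs (its
legs, and two elements of its body), `F` contains an incomparable pair. The key point is that `F`
contains a cube edge `A, A ∪ {x}` in every direction `x`. If `{x} ∉ F`, then `{x}` and some
`C ∈ F` are the legs of a copy of `P` with all other elements in `F`; take such a `C` of maximal
size. If `C ∪ {x}` were missing, the copy it completes would either give a larger `C` or, after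
swapping in new legs, a copy of `P` inside `F`. Finally, contracting a direction merges the two
ends of its edge, so induction on the ground set shows that a family containing `∅`, the ground
set, an incomparable pair and an edge in every direction has at least `n + 2` members.
-/

namespace Finset

variable {α : Type*} [DecidableEq α]

def HasEdgeAlong (V : Finset (Finset α)) (x : α) : Prop :=
  ∃ A ∈ V, x ∉ A ∧ insert x A ∈ V

lemma HasEdgeAlong.card_image_erase_lt {V : Finset (Finset α)} {x : α} (h : V.HasEdgeAlong x) :
    #(V.image (·.erase x)) < #V := by
  obtain ⟨A, hA, hxA, hxA'⟩ := h
  refine card_image_le.lt_of_ne fun hcard => ?_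
  have := card_image_iff.1 hcard hA hxA' (erase_insert_eq_erase A x).symm
  exact hxA (this ▸ mem_insert_self x A)

lemma HasEdgeAlong.image_erase {V : Finset (Finset α)} {x y : α} (h : V.HasEdgeAlong y)
    (hxy : y ≠ x) : (V.image (·.erase x)).HasEdgeAlong y := by
  obtain ⟨A, hA, hyA, hyA'⟩ := h
  exact ⟨A.erase x, mem_image_of_mem _ hA, fun h => hyA (mem_of_mem_erase h),
    erase_insert_of_ne hxy ▸ mem_image_of_mem _ hyA'⟩

lemma card_add_two_le_of_hasEdgeAlong {γ : Finset α} {V : Finset (Finset α)}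
    (hV : ∀ A ∈ V, A ⊆ γ) (hempty : ∅ ∈ V) (hγ : γ ∈ V) (hedge : ∀ x ∈ γ, V.HasEdgeAlong x)
    {U U' : Finset α} (hU : U ∈ V) (hU' : U' ∈ V) (hUU' : ¬ U ⊆ U') (hU'U : ¬ U' ⊆ U) :
    #γ + 2 ≤ #V := by
  induction γ using Finset.strongInduction generalizing V U U' with
  | H γ ih =>
  by_cases hγ2 : #γ ≤ 2
  · have hsub : ({∅, U, U', γ} : Finset (Finset α)) ⊆ V := by
      simp [insert_subset_iff, hempty, hU, hU', hγ]
    have hU0 : U ≠ ∅ := by rintro rfl; exact hUU' (empty_subset _)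
    have hU'0 : U' ≠ ∅ := by rintro rfl; exact hU'U (empty_subset _)
    have hUγ : U ≠ γ := by rintro rfl; exact hU'U (hV _ hU')
    have hU'γ : U' ≠ γ := by rintro rfl; exact hUU' (hV _ hU)
    have hUU'ne : U ≠ U' := by rintro rfl; exact hUU' subset_rfl
    have hemptyγ : (∅ : Finset α) ≠ γ := by
      rintro rfl; exact hUU' ((hV _ hU).trans (empty_subset _))
    have := card_le_card hsub
    rw [card_insert_of_notMem (by simp [hU0.symm, hU'0.symm, hemptyγ]),
      card_insert_of_notMem (by simp [hUU'ne, hUγ]), card_pair hU'γ] at this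
    omega
  obtain ⟨u, huU, huU'⟩ := not_subset.1 hUU'
  obtain ⟨u', hu'U', hu'U⟩ := not_subset.1 hU'U
  -- Contracting a direction `x ∉ {u, u'}` keeps `U` and `U'` incomparable.
  have hcard : 1 < #(γ.erase u) := by have := pred_card_le_card_erase (s := γ) (a := u); omega
  obtain ⟨x, hx, hxu'⟩ := (γ.erase u).exists_mem_ne hcard u'
  have hxu : x ≠ u := ne_of_mem_erase hx
  have hxγ : x ∈ γ := mem_of_mem_erase hx
  have hcontract := ih (γ.erase x) (erase_ssubset hxγ) (V := V.image (·.erase x))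
    (by simp only [mem_image]; rintro _ ⟨A, hA, rfl⟩; exact erase_subset_erase x (hV A hA))
    (mem_image.2 ⟨∅, hempty, erase_empty x⟩) (mem_image_of_mem _ hγ)
    (fun y hy => (hedge y (mem_of_mem_erase hy)).image_erase (ne_of_mem_erase hy))
    (mem_image_of_mem _ hU) (mem_image_of_mem _ hU')
    (fun h => huU' (mem_of_mem_erase (h (mem_erase.2 ⟨hxu.symm, huU⟩))))
    (fun h => hu'U (mem_of_mem_erase (h (mem_erase.2 ⟨hxu'.symm, hu'U'⟩))))
  have := (hedge x hxγ).card_image_erase_lt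
  rw [card_erase_of_mem hxγ] at hcontract
  omega

end Finset

def IsLegPair (P : Type*) [PartialOrder P] (F : Finset (Finset ℕ)) (R R' : Finset ℕ) : Prop :=
  ∃ l₁ l₂ : P, IsLegs P l₁ l₂ ∧ ∃ f : P ↪o Finset ℕ, f l₁ = R ∧ f l₂ = R' ∧
    ∀ c, c ≠ l₁ → c ≠ l₂ → f c ∈ F

section InducedCopy

variable {P : Type*} [PartialOrder P]

lemma containsIndCopy_iff {F : Finset (Finset ℕ)} :
    ContainsIndCopy P F ↔ ∃ f : P ↪o Finset ℕ, ∀ p, f p ∈ F :=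
  ⟨fun ⟨f, _, hF, hf⟩ => ⟨.ofMapLEIff f fun p q => (hf p q).symm, hF⟩,
    fun ⟨f, hF⟩ => ⟨f, f.injective, hF, fun _ _ => f.le_iff_le.symm⟩⟩

namespace IsLegs

variable {a b : P}

lemma symm (h : IsLegs P a b) : IsLegs P b a :=
  ⟨h.2.1, h.1, fun c hcb hca => (h.2.2 c hca hcb).symm⟩

lemma not_exists_isBot (h : IsLegs P a b) : ¬ ∃ m : P, IsBot m := by
  rintro ⟨m, hm⟩
  by_cases hma : m = a
  · exact h.1 (hma ▸ hm b)
  by_cases hmb : m = b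
  · exact h.2.1 (hmb ▸ hm a)
  exact (h.2.2 m hma hmb).1.not_ge (hm a)

lemma exists_incomparable [Finite P] (h : IsLegs P a b) (hbody : ∃ c : P, c ≠ a ∧ c ≠ b)
    (htop : ¬ ∃ m : P, IsTop m) :
    ∃ c₁ c₂ : P, c₁ ≠ a ∧ c₁ ≠ b ∧ c₂ ≠ a ∧ c₂ ≠ b ∧ ¬ c₁ ≤ c₂ ∧ ¬ c₂ ≤ c₁ := by
  obtain ⟨c, hca, hcb⟩ := hbody
  obtain ⟨m, hcm, hm⟩ := Finite.exists_le_maximal (p := fun _ : P => True) trivial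
  have ham : a < m := (h.2.2 c hca hcb).1.trans_le hcm
  have hbm : b < m := (h.2.2 c hca hcb).2.trans_le hcm
  obtain ⟨p, hpm⟩ : ∃ p, ¬ p ≤ m := by simpa [IsTop] using fun h => htop ⟨m, h⟩
  refine ⟨m, p, ham.ne', hbm.ne', ?_, ?_, fun hmp => hpm (hm.le_of_ge trivial hmp), hpm⟩
  · rintro rfl; exact hpm ham.le
  · rintro rfl; exact hpm hbm.le

lemma exists_orderEmbedding_update {β : Type*} [PartialOrder β] (hl : IsLegs P a b)
    (f : P ↪o β) {R R' : β} (hRR' : ¬ R ≤ R') (hR'R : ¬ R' ≤ R)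
    (hR : ∀ c, c ≠ a → c ≠ b → R < f c) (hR' : ∀ c, c ≠ a → c ≠ b → R' < f c) :
    ∃ g : P ↪o β, g a = R ∧ g b = R' ∧ ∀ c, c ≠ a → c ≠ b → g c = f c := by
  classical
  obtain ⟨hab, hba, hbody⟩ := hl
  have hne : a ≠ b := by rintro rfl; exact hab le_rfl
  let g : P → β := fun p => if p = a then R else if p = b then R' else f p
  refine ⟨.ofMapLEIff g fun p q => ?_, by simp [g], by simp [g, hne.symm],
    fun c hca hcb => by simp [g, hca, hcb]⟩
  simp only [g]
  split_ifs <;> subst_vars <;> grind [f.le_iff_le, le_of_lt, not_le_of_gt]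

end IsLegs

namespace IsLegPair

variable {F : Finset (Finset ℕ)} {R R' T T' : Finset ℕ}

lemma symm (h : IsLegPair P F R R') : IsLegPair P F R' R :=
  let ⟨l₁, l₂, hl, f, h₁, h₂, hF⟩ := h
  ⟨l₂, l₁, hl.symm, f, h₂, h₁, fun c hc₂ hc₁ => hF c hc₁ hc₂⟩

lemma not_subset (h : IsLegPair P F R R') : ¬ R ⊆ R' := by
  obtain ⟨l₁, l₂, hl, f, rfl, rfl, -⟩ := h
  exact fun h => hl.1 (f.le_iff_le.1 h)

lemma containsIndCopy (h : IsLegPair P F R R') (hR : R ∈ F) (hR' : R' ∈ F) :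
    ContainsIndCopy P F := by
  obtain ⟨l₁, l₂, -, f, rfl, rfl, hF⟩ := h
  refine containsIndCopy_iff.2 ⟨f, fun p => ?_⟩
  by_cases hp₁ : p = l₁
  · exact hp₁ ▸ hR
  by_cases hp₂ : p = l₂
  · exact hp₂ ▸ hR'
  exact hF p hp₁ hp₂

/-- Every non-leg element of the copy contains the union of the legs. -/
lemma of_ssubset_union (h : IsLegPair P F R R') (hTT' : ¬ T ⊆ T') (hT'T : ¬ T' ⊆ T)
    (hT : T ⊂ R ∪ R') (hT' : T' ⊂ R ∪ R') : IsLegPair P F T T' := by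
  obtain ⟨l₁, l₂, hl, f, rfl, rfl, hF⟩ := h
  have hunion : ∀ c, c ≠ l₁ → c ≠ l₂ → f l₁ ∪ f l₂ ⊆ f c := fun c hc₁ hc₂ =>
    union_subset (f.le_iff_le.2 (hl.2.2 c hc₁ hc₂).1.le) (f.le_iff_le.2 (hl.2.2 c hc₁ hc₂).2.le)
  obtain ⟨g, rfl, rfl, hg⟩ := hl.exists_orderEmbedding_update f hTT' hT'T
    (fun c hc₁ hc₂ => hT.trans_subset (hunion c hc₁ hc₂))
    (fun c hc₁ hc₂ => hT'.trans_subset (hunion c hc₁ hc₂))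
  exact ⟨l₁, l₂, hl, g, rfl, rfl, fun c hc₁ hc₂ => hg c hc₁ hc₂ ▸ hF c hc₁ hc₂⟩

end IsLegPair

namespace IsIndPSaturated

variable {n : ℕ} {F : Finset (Finset ℕ)} {G : Finset ℕ}

lemma exists_orderEmbedding (hsat : IsIndPSaturated n P F) (hG : G ⊆ Icc 1 n) (hGF : G ∉ F) :
    ∃ f : P ↪o Finset ℕ, ∃ p₀, f p₀ = G ∧ ∀ p, p ≠ p₀ → f p ∈ F := by
  obtain ⟨f, hF⟩ := containsIndCopy_iff.1 (hsat.2.2 G hG hGF)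
  by_cases hrange : ∃ p₀, f p₀ = G
  · obtain ⟨p₀, hp₀⟩ := hrange
    refine ⟨f, p₀, hp₀, fun p hp => (mem_insert.1 (hF p)).resolve_left fun hpG => ?_⟩
    exact hp (f.injective (hpG.trans hp₀.symm))
  · push Not at hrange
    exact (hsat.2.1 (containsIndCopy_iff.2
      ⟨f, fun p => (mem_insert.1 (hF p)).resolve_left (hrange p)⟩)).elim

lemma empty_mem (hsat : IsIndPSaturated n P F) (hbot : ¬ ∃ m : P, IsBot m) : ∅ ∈ F := by
  by_contra hF
  obtain ⟨f, p₀, hp₀, -⟩ := hsat.exists_orderEmbedding (empty_subset _) hF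
  exact hbot ⟨p₀, fun q => f.le_iff_le.1 (hp₀ ▸ empty_subset (f q))⟩

lemma Icc_mem (hsat : IsIndPSaturated n P F) (htop : ¬ ∃ m : P, IsTop m) : Icc 1 n ∈ F := by
  by_contra hF
  obtain ⟨f, p₀, hp₀, hf⟩ := hsat.exists_orderEmbedding subset_rfl hF
  refine htop ⟨p₀, fun q => f.le_iff_le.1 ?_⟩
  by_cases hq : q = p₀
  · rw [hq]
  · exact hp₀ ▸ hsat.1 _ (hf q hq)

variable {a b : P}

lemma exists_incomparable [Finite P] (hsat : IsIndPSaturated n P F) (hlegs : IsLegs P a b)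
    (hbody : ∃ c : P, c ≠ a ∧ c ≠ b) (htop : ¬ ∃ m : P, IsTop m)
    (hG : G ⊆ Icc 1 n) (hGF : G ∉ F) :
    ∃ U ∈ F, ∃ U' ∈ F, ¬ U ⊆ U' ∧ ¬ U' ⊆ U := by
  obtain ⟨f, p₀, -, hf⟩ := hsat.exists_orderEmbedding hG hGF
  have hpair : ∀ p q, p ≠ p₀ → q ≠ p₀ → ¬ p ≤ q → ¬ q ≤ p →
      ∃ U ∈ F, ∃ U' ∈ F, ¬ U ⊆ U' ∧ ¬ U' ⊆ U := fun p q hp hq hpq hqp =>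
    ⟨f p, hf p hp, f q, hf q hq, mt f.le_iff_le.1 hpq, mt f.le_iff_le.1 hqp⟩
  by_cases hp₀ : p₀ = a ∨ p₀ = b
  · obtain ⟨c₁, c₂, hc₁a, hc₁b, hc₂a, hc₂b, h₁₂, h₂₁⟩ := hlegs.exists_incomparable hbody htop
    rcases hp₀ with rfl | rfl
    · exact hpair c₁ c₂ hc₁a hc₂a h₁₂ h₂₁
    · exact hpair c₁ c₂ hc₁b hc₂b h₁₂ h₂₁
  · push Not at hp₀
    exact hpair a b hp₀.1.symm hp₀.2.symm hlegs.1 hlegs.2.1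

/-- `G` is the image either of a leg or of an element above both legs. -/
lemma exists_isLegPair_or_ssubset (hsat : IsIndPSaturated n P F) (hlegs : IsLegs P a b)
    (hG : G ⊆ Icc 1 n) (hGF : G ∉ F) :
    (∃ C ∈ F, IsLegPair P F G C) ∨
      ∃ T ∈ F, ∃ T' ∈ F, ¬ T ⊆ T' ∧ ¬ T' ⊆ T ∧ T ⊂ G ∧ T' ⊂ G := by
  obtain ⟨f, p₀, rfl, hf⟩ := hsat.exists_orderEmbedding hG hGF
  have hab : a ≠ b := by rintro rfl; exact hlegs.1 le_rfl
  by_cases hpa : p₀ = a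
  · subst p₀
    exact .inl ⟨f b, hf b hab.symm, a, b, hlegs, f, rfl, rfl, fun c hca _ => hf c hca⟩
  by_cases hpb : p₀ = b
  · subst p₀
    exact .inl ⟨f a, hf a hab, b, a, hlegs.symm, f, rfl, rfl, fun c hcb _ => hf c hcb⟩
  obtain ⟨hap, hbp⟩ := hlegs.2.2 p₀ hpa hpb
  exact .inr ⟨f a, hf a (Ne.symm hpa), f b, hf b (Ne.symm hpb), mt f.le_iff_le.1 hlegs.1,
    mt f.le_iff_le.1 hlegs.2.1, f.lt_iff_lt.2 hap, f.lt_iff_lt.2 hbp⟩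

lemma exists_isLegPair_singleton (hsat : IsIndPSaturated n P F) (hlegs : IsLegs P a b)
    {x : ℕ} (hx : x ∈ Icc 1 n) (hxF : {x} ∉ F) : ∃ C ∈ F, IsLegPair P F {x} C := by
  refine (hsat.exists_isLegPair_or_ssubset hlegs (singleton_subset_iff.2 hx) hxF).resolve_right
    ?_
  rintro ⟨T, -, T', -, hTT', -, hT, hT'⟩
  rw [ssubset_singleton_iff] at hT hT'
  exact hTT' (hT ▸ empty_subset T')

/-- If `{x} ∪ C` were missing from `F`, the copy it completes would give either a larger `C`
or, after replacing its legs, a copy of `P` inside `F`. -/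
lemma insert_mem_of_isLegPair_singleton (hsat : IsIndPSaturated n P F) (hlegs : IsLegs P a b)
    {x : ℕ} (hx : x ∈ Icc 1 n) {C : Finset ℕ} (hCF : C ∈ F) (hC : IsLegPair P F {x} C)
    (hmax : ∀ C' ∈ F, IsLegPair P F {x} C' → #C' ≤ #C) : insert x C ∈ F := by
  have hxC : x ∉ C := fun h => hC.not_subset (singleton_subset_iff.2 h)
  by_contra hW
  rcases hsat.exists_isLegPair_or_ssubset hlegs (insert_subset hx (hsat.1 C hCF)) hW with
    ⟨C₁, hC₁F, hWC₁⟩ | ⟨T, hT, T', hT', hTT', hT'T, hTW, hT'W⟩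
  · have hC₁W : ¬ C₁ ⊆ insert x C := hWC₁.symm.not_subset
    have hunion : ∀ T ⊆ insert x C, T ⊂ insert x C ∪ C₁ := fun T hT =>
      ssubset_of_subset_of_ne (hT.trans subset_union_left)
        fun h => hC₁W (subset_union_right.trans (h ▸ hT))
    have hC₁ : C₁ ⊂ insert x C ∪ C₁ :=
      ssubset_of_subset_of_ne subset_union_right
        fun h => hWC₁.not_subset (union_eq_right.1 h.symm)
    by_cases hCC₁ : C ⊆ C₁
    · have hxC₁ : x ∉ C₁ := fun h => hWC₁.not_subset (insert_subset h hCC₁)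
      have hlt : #C < #C₁ := card_lt_card (ssubset_of_subset_of_ne hCC₁
        fun h => hC₁W (h ▸ subset_insert x C))
      refine (hmax C₁ hC₁F (hWC₁.of_ssubset_union ?_ ?_ ?_ hC₁)).not_gt hlt
      · exact fun h => hxC₁ (singleton_subset_iff.1 h)
      · exact fun h => hC.symm.not_subset (hCC₁.trans h)
      · exact hunion {x} (singleton_subset_iff.2 (mem_insert_self x C))
    · exact hsat.2.1 ((hWC₁.of_ssubset_union hCC₁ (fun h => hC₁W (h.trans (subset_insert x C)))
        (hunion C (subset_insert x C)) hC₁).containsIndCopy hCF hC₁F)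
  · rw [insert_eq] at hTW hT'W
    exact hsat.2.1 ((hC.of_ssubset_union hTT' hT'T hTW hT'W).containsIndCopy hT hT')

lemma hasEdgeAlong (hsat : IsIndPSaturated n P F) (hlegs : IsLegs P a b) {x : ℕ}
    (hx : x ∈ Icc 1 n) : F.HasEdgeAlong x := by
  classical
  by_cases hxF : {x} ∈ F
  · exact ⟨∅, hsat.empty_mem hlegs.not_exists_isBot, notMem_empty x, hxF⟩
  obtain ⟨C, hC, hmax⟩ := exists_max_image (F.filter (IsLegPair P F {x})) card
    (by simpa [Finset.Nonempty] using hsat.exists_isLegPair_singleton hlegs hx hxF)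
  rw [mem_filter] at hC
  refine ⟨C, hC.1, fun h => hC.2.not_subset (singleton_subset_iff.2 h), ?_⟩
  exact hsat.insert_mem_of_isLegPair_singleton hlegs hx hC.1 hC.2
    fun C' hC'F hC' => hmax C' (mem_filter.2 ⟨hC'F, hC'⟩)

end IsIndPSaturated

lemma exists_isIndPSaturated [Nonempty P] (n : ℕ) :
    ∃ F : Finset (Finset ℕ), IsIndPSaturated n P F := by
  classical
  let free := (Icc 1 n).powerset.powerset.filter (¬ ContainsIndCopy P ·)
  have hempty : ∅ ∈ free := mem_filter.2 ⟨empty_mem_powerset _, fun h =>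
    let ⟨f, hf⟩ := containsIndCopy_iff.1 h; notMem_empty _ (hf (Classical.arbitrary P))⟩
  obtain ⟨F, hF, hmax⟩ := exists_max_image free card ⟨∅, hempty⟩
  rw [mem_filter, mem_powerset] at hF
  refine ⟨F, fun A hA => mem_powerset.1 (hF.1 hA), hF.2, fun G hG hGF => ?_⟩
  by_contra hfree
  have := hmax (insert G F)
    (mem_filter.2 ⟨mem_powerset.2 (insert_subset (mem_powerset.2 hG) hF.1), hfree⟩)
  rw [card_insert_of_notMem hGF] at this
  omega

end InducedCopy

/-- if `P` has legs `a, b`, a nonempty body, and no maximum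
element, then `sat*(n, P) ≥ min(2^n, n + 2)`. -/
theorem stmt15 (P : Type*) [PartialOrder P] [Fintype P] (a b : P)
    (hlegs : IsLegs P a b)
    (hbody : ∃ c : P, c ≠ a ∧ c ≠ b)
    (hnomax : ¬ ∃ m : P, ∀ p : P, p ≠ m → p < m)
    (n : ℕ) : min (2^n) (n + 2) ≤ satStarP n P := by
  have : Nonempty P := ⟨a⟩
  have htop : ¬ ∃ m : P, IsTop m := fun ⟨m, hm⟩ => hnomax ⟨m, fun p hp => (hm p).lt_of_ne hp⟩
  obtain ⟨F₀, hF₀⟩ := exists_isIndPSaturated (P := P) n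
  refine le_csInf ⟨_, F₀, hF₀, rfl⟩ ?_
  rintro _ ⟨F, hsat, rfl⟩
  by_cases hfull : (Icc 1 n).powerset ⊆ F
  · have hF : F = (Icc 1 n).powerset :=
      subset_antisymm (fun A hA => mem_powerset.2 (hsat.1 A hA)) hfull
    simp [hF]
  obtain ⟨G, hG, hGF⟩ := not_subset.1 hfull
  obtain ⟨U, hU, U', hU', hUU', hU'U⟩ :=
    hsat.exists_incomparable hlegs hbody htop (mem_powerset.1 hG) hGF
  have hcard := card_add_two_le_of_hasEdgeAlong hsat.1 (hsat.empty_mem hlegs.not_exists_isBot)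
    (hsat.Icc_mem htop) (fun x hx => hsat.hasEdgeAlong hlegs hx) hU hU' hUU' hU'U
  rw [Nat.card_Icc, Nat.add_sub_cancel] at hcard
  exact (min_le_right _ _).trans hcard
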